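/- Let F be an algebraically closed field, f(ξ) ∈ F[ξ] a nonzero polynomial with zero constant term, and γ ∈ F. For x in the split octonion algebra O over F, the equation f(x) = γ·1 + u₁ holds if and only if there exists ξ₁ ∈ F with f(ξ₁) = γ, f′(ξ₁) ≠ 0, and x = ξ₁·1 + (1/f′(ξ₁))·u₁. -/

import Mathlib

/-!
By the quadratic identity `x² = tr(x) x - n(x) 1`, every `f(x)` lies in `F 1 + F x`. If
`f(x) = a 1 + b x = γ 1 + u₁`, then `b ≠ 0` as `u₁ ∉ F 1`, so `x` itself lies in `F 1 + F u₁`.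
That plane is a copy of the dual numbers `F[ε]/(ε²)` with `ε = u₁`, on which
`f(ξ 1 + t u₁) = f(ξ) 1 + t f'(ξ) u₁`, and comparing coefficients gives the solutions.
-/

noncomputable section

/-- The split octonion algebra over `F`, given by Zorn vector matrices
`(x1, u; v, x2)` with `x1, x2 ∈ F` and `u, v ∈ F³`. -/
@[ext]
structure SplitOctonion (F : Type*) where
  x1 : F
  u : Fin 3 → F
  v : Fin 3 → F
  x2 : F

namespace SplitOctonion

variable {F : Type*} [Field F]

/-- Dot product on `F³`. -/
def dot (x y : Fin 3 → F) : F := x 0 * y 0 + x 1 * y 1 + x 2 * y 2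

/-- Cross product on `F³`. -/
def cross (x y : Fin 3 → F) : Fin 3 → F :=
  ![x 1 * y 2 - x 2 * y 1, x 2 * y 0 - x 0 * y 2, x 0 * y 1 - x 1 * y 0]

instance : Zero (SplitOctonion F) := ⟨⟨0, 0, 0, 0⟩⟩
instance : One (SplitOctonion F) := ⟨⟨1, 0, 0, 1⟩⟩
instance : Add (SplitOctonion F) :=
  ⟨fun x y => ⟨x.x1 + y.x1, x.u + y.u, x.v + y.v, x.x2 + y.x2⟩⟩
instance : Neg (SplitOctonion F) := ⟨fun x => ⟨-x.x1, -x.u, -x.v, -x.x2⟩⟩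
instance : SMul F (SplitOctonion F) :=
  ⟨fun c x => ⟨c * x.x1, c • x.u, c • x.v, c * x.x2⟩⟩

/-- Zorn vector matrix multiplication. -/
instance : Mul (SplitOctonion F) :=
  ⟨fun x y => ⟨x.x1 * y.x1 + dot x.u y.v,
    x.x1 • y.u + y.x2 • x.u - cross x.v y.v,
    y.x1 • x.v + x.x2 • y.v + cross x.u y.u,
    x.x2 * y.x2 + dot x.v y.u⟩⟩

@[simp] lemma zero_x1 : (0 : SplitOctonion F).x1 = 0 := rfl
@[simp] lemma zero_u : (0 : SplitOctonion F).u = 0 := rfl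
@[simp] lemma zero_v : (0 : SplitOctonion F).v = 0 := rfl
@[simp] lemma zero_x2 : (0 : SplitOctonion F).x2 = 0 := rfl
@[simp] lemma add_x1 (x y : SplitOctonion F) : (x + y).x1 = x.x1 + y.x1 := rfl
@[simp] lemma add_u (x y : SplitOctonion F) : (x + y).u = x.u + y.u := rfl
@[simp] lemma add_v (x y : SplitOctonion F) : (x + y).v = x.v + y.v := rfl
@[simp] lemma add_x2 (x y : SplitOctonion F) : (x + y).x2 = x.x2 + y.x2 := rfl
@[simp] lemma neg_x1 (x : SplitOctonion F) : (-x).x1 = -x.x1 := rfl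
@[simp] lemma neg_u (x : SplitOctonion F) : (-x).u = -x.u := rfl
@[simp] lemma neg_v (x : SplitOctonion F) : (-x).v = -x.v := rfl
@[simp] lemma neg_x2 (x : SplitOctonion F) : (-x).x2 = -x.x2 := rfl
@[simp] lemma smul_x1 (c : F) (x : SplitOctonion F) : (c • x).x1 = c * x.x1 := rfl
@[simp] lemma smul_u (c : F) (x : SplitOctonion F) : (c • x).u = c • x.u := rfl
@[simp] lemma smul_v (c : F) (x : SplitOctonion F) : (c • x).v = c • x.v := rfl
@[simp] lemma smul_x2 (c : F) (x : SplitOctonion F) : (c • x).x2 = c * x.x2 := rfl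

instance : AddCommGroup (SplitOctonion F) where
  add_assoc x y z := by ext <;> simp [add_assoc]
  zero_add x := by ext <;> simp
  add_zero x := by ext <;> simp
  add_comm x y := by ext <;> simp [add_comm]
  neg_add_cancel x := by ext <;> simp
  nsmul := nsmulRec
  zsmul := zsmulRec

instance : Module F (SplitOctonion F) where
  one_smul x := by ext <;> simp
  mul_smul c d x := by ext <;> simp [mul_assoc, mul_smul]
  smul_zero c := by ext <;> simp
  smul_add c x y := by ext <;> simp [mul_add, smul_add]
  add_smul c d x := by ext <;> simp [add_mul, add_smul]
  zero_smul x := by ext <;> simp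

/-- Powers of a single octonion (well defined by power-associativity). -/
def npow (x : SplitOctonion F) : ℕ → SplitOctonion F
  | 0 => 1
  | n + 1 => npow x n * x

instance : Pow (SplitOctonion F) ℕ := ⟨npow⟩

/-- Substitution of an octonion into a polynomial over `F`:
`f(x) = αₙ xⁿ + ⋯ + α₁ x + α₀ • 1`. -/
def peval (f : Polynomial F) (x : SplitOctonion F) : SplitOctonion F :=
  f.sum fun i c => c • x ^ i

/-- The octonion `e₁`. -/
def e1 : SplitOctonion F := ⟨1, 0, 0, 0⟩
/-- The octonion `e₂`. -/
def e2 : SplitOctonion F := ⟨0, 0, 0, 1⟩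
/-- The octonion `u₁`. -/
def u1 : SplitOctonion F := ⟨0, ![1, 0, 0], 0, 0⟩

/-- Conjugation on `O`. -/
def conj (x : SplitOctonion F) : SplitOctonion F := ⟨x.x2, -x.u, -x.v, x.x1⟩

/-- The norm of an octonion. -/
def normO (x : SplitOctonion F) : F := x.x1 * x.x2 - dot x.u x.v

/-- The trace of an octonion. -/
def trO (x : SplitOctonion F) : F := x.x1 + x.x2

/-- `g` is an `F`-algebra automorphism of `O`: a linear bijection preserving
multiplication (and the unit). -/
def IsAlgAut (g : SplitOctonion F ≃ₗ[F] SplitOctonion F) : Prop :=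
  g 1 = 1 ∧ ∀ x y, g (x * y) = g x * g y

end SplitOctonion

namespace SplitOctonion

open Polynomial

variable {F : Type*} [Field F]

@[simp] lemma one_x1 : (1 : SplitOctonion F).x1 = 1 := rfl
@[simp] lemma one_u : (1 : SplitOctonion F).u = 0 := rfl
@[simp] lemma one_v : (1 : SplitOctonion F).v = 0 := rfl
@[simp] lemma one_x2 : (1 : SplitOctonion F).x2 = 1 := rfl

@[simp] lemma mul_x1 (x y : SplitOctonion F) : (x * y).x1 = x.x1 * y.x1 + dot x.u y.v := rfl
@[simp] lemma mul_u (x y : SplitOctonion F) :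
    (x * y).u = x.x1 • y.u + y.x2 • x.u - cross x.v y.v := rfl
@[simp] lemma mul_v (x y : SplitOctonion F) :
    (x * y).v = y.x1 • x.v + x.x2 • y.v + cross x.u y.u := rfl
@[simp] lemma mul_x2 (x y : SplitOctonion F) : (x * y).x2 = x.x2 * y.x2 + dot x.v y.u := rfl

@[simp] protected lemma pow_zero (x : SplitOctonion F) : x ^ 0 = 1 := rfl
protected lemma pow_succ (x : SplitOctonion F) (n : ℕ) : x ^ (n + 1) = x ^ n * x := rfl

lemma peval_add (p q : F[X]) (x : SplitOctonion F) :
    peval (p + q) x = peval p x + peval q x :=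
  sum_add_index p q _ (fun _ => zero_smul F _) (fun _ _ _ => add_smul _ _ _)

lemma peval_monomial (n : ℕ) (c : F) (x : SplitOctonion F) :
    peval (monomial n c) x = c • x ^ n :=
  sum_monomial_index c _ (zero_smul F _)

lemma smul_one_add_smul_mul (a b : F) (x : SplitOctonion F) :
    (a • 1 + b • x) * x = (-(b * normO x)) • 1 + (a + b * trO x) • x := by
  ext i <;> (try fin_cases i) <;> simp [dot, cross, normO, trO] <;> ring

lemma exists_pow_eq_smul_one_add_smul (x : SplitOctonion F) (n : ℕ) :
    ∃ a b : F, x ^ n = a • 1 + b • x := by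
  induction n with
  | zero => exact ⟨1, 0, by simp⟩
  | succ n ih =>
    obtain ⟨a, b, h⟩ := ih
    exact ⟨_, _, by rw [SplitOctonion.pow_succ, h, smul_one_add_smul_mul]⟩

lemma exists_peval_eq_smul_one_add_smul (f : F[X]) (x : SplitOctonion F) :
    ∃ a b : F, peval f x = a • 1 + b • x := by
  induction f using Polynomial.induction_on' with
  | add p q hp hq =>
    obtain ⟨a, b, hp⟩ := hp
    obtain ⟨c, d, hq⟩ := hq
    exact ⟨a + c, b + d, by rw [peval_add, hp, hq]; module⟩
  | monomial n c =>
    obtain ⟨a, b, h⟩ := exists_pow_eq_smul_one_add_smul x n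
    exact ⟨c * a, c * b, by rw [peval_monomial, h]; module⟩

lemma smul_one_ne_smul_one_add_u1 (a γ : F) : a • (1 : SplitOctonion F) ≠ γ • 1 + u1 := by
  intro h
  simpa [u1] using congrFun (congrArg SplitOctonion.u h) 0

lemma exists_eq_smul_one_add_smul_u1_of_peval_eq {f : F[X]} {γ : F} {x : SplitOctonion F}
    (h : peval f x = γ • 1 + u1) : ∃ ξ t : F, x = ξ • 1 + t • u1 := by
  obtain ⟨a, b, hab⟩ := exists_peval_eq_smul_one_add_smul f x
  rw [hab] at h
  have hb : b ≠ 0 := by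
    rintro rfl
    exact smul_one_ne_smul_one_add_u1 a γ (by simpa using h)
  refine ⟨b⁻¹ * (γ - a), b⁻¹, ?_⟩
  have hx : x = b⁻¹ • (b • x) := (inv_smul_smul₀ hb x).symm
  rw [hx, eq_sub_of_add_eq' h]
  module

def dualU1 (ξ t : F) : SplitOctonion F := ⟨ξ, t • ![1, 0, 0], 0, ξ⟩

@[simp] lemma dualU1_x1 (ξ t : F) : (dualU1 ξ t).x1 = ξ := rfl
@[simp] lemma dualU1_u (ξ t : F) : (dualU1 ξ t).u = t • ![1, 0, 0] := rfl
@[simp] lemma dualU1_v (ξ t : F) : (dualU1 ξ t).v = 0 := rfl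
@[simp] lemma dualU1_x2 (ξ t : F) : (dualU1 ξ t).x2 = ξ := rfl

lemma smul_one_add_smul_u1 (ξ t : F) : ξ • (1 : SplitOctonion F) + t • u1 = dualU1 ξ t := by
  ext i <;> (try fin_cases i) <;> simp [u1]

lemma dualU1_inj {ξ t ξ' t' : F} : dualU1 ξ t = dualU1 ξ' t' ↔ ξ = ξ' ∧ t = t' := by
  refine ⟨fun h => ⟨congrArg x1 h, ?_⟩, fun ⟨hξ, ht⟩ => hξ ▸ ht ▸ rfl⟩
  simpa using congrFun (congrArg SplitOctonion.u h) 0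

lemma dualU1_add (ξ t ξ' t' : F) : dualU1 ξ t + dualU1 ξ' t' = dualU1 (ξ + ξ') (t + t') := by
  ext i <;> (try fin_cases i) <;> simp

lemma smul_dualU1 (c ξ t : F) : c • dualU1 ξ t = dualU1 (c * ξ) (c * t) := by
  ext i <;> (try fin_cases i) <;> simp

lemma dualU1_mul (ξ t ξ' t' : F) :
    dualU1 ξ t * dualU1 ξ' t' = dualU1 (ξ * ξ') (ξ * t' + ξ' * t) := by
  ext i <;> (try fin_cases i) <;> simp [cross, dot]

lemma dualU1_pow (ξ t : F) (n : ℕ) : dualU1 ξ t ^ n = dualU1 (ξ ^ n) (n * ξ ^ (n - 1) * t) := by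
  induction n with
  | zero => ext i <;> simp
  | succ n ih =>
    rw [SplitOctonion.pow_succ, ih, dualU1_mul, dualU1_inj]
    refine ⟨(pow_succ ξ n).symm, ?_⟩
    rcases n with _ | n
    · simp
    · push_cast
      ring

lemma peval_dualU1 (f : F[X]) (ξ t : F) :
    peval f (dualU1 ξ t) = dualU1 (f.eval ξ) (t * (derivative f).eval ξ) := by
  induction f using Polynomial.induction_on' with
  | add p q hp hq => rw [peval_add, hp, hq, dualU1_add]; simp [mul_add]
  | monomial n c =>
    rw [peval_monomial, dualU1_pow, smul_dualU1, dualU1_inj]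
    simp [derivative_monomial]
    ring

end SplitOctonion

open SplitOctonion Polynomial in
theorem peval_eq_smul_one_add_u1_iff_general {F : Type*} [Field F]
    (f : Polynomial F) (γ : F) (x : SplitOctonion F) :
    peval f x = γ • (1 : SplitOctonion F) + u1 ↔
      ∃ ξ₁ : F, f.eval ξ₁ = γ ∧ (derivative f).eval ξ₁ ≠ 0 ∧
        x = ξ₁ • (1 : SplitOctonion F) + ((derivative f).eval ξ₁)⁻¹ • u1 := by
  have hrhs : γ • (1 : SplitOctonion F) + u1 = dualU1 γ 1 := by
    rw [← smul_one_add_smul_u1, one_smul]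
  constructor
  · intro h
    obtain ⟨ξ, t, rfl⟩ := exists_eq_smul_one_add_smul_u1_of_peval_eq h
    rw [hrhs, smul_one_add_smul_u1, peval_dualU1, dualU1_inj] at h
    obtain ⟨hγ, ht⟩ := h
    refine ⟨ξ, hγ, right_ne_zero_of_mul_eq_one ht, ?_⟩
    rw [inv_eq_of_mul_eq_one_left ht]
  · rintro ⟨ξ, hγ, hd, rfl⟩
    rw [hrhs, smul_one_add_smul_u1, peval_dualU1, hγ, inv_mul_cancel₀ hd]

open SplitOctonion Polynomial in
/-- solutions of `f(x) = γ·1 + u₁`. -/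
theorem peval_eq_smul_one_add_u1_iff {F : Type*} [Field F] [IsAlgClosed F]
    (f : Polynomial F) (hf : f ≠ 0) (hf0 : f.coeff 0 = 0) (γ : F) (x : SplitOctonion F) :
    peval f x = γ • (1 : SplitOctonion F) + u1 ↔
      ∃ ξ₁ : F, f.eval ξ₁ = γ ∧ (derivative f).eval ξ₁ ≠ 0 ∧
        x = ξ₁ • (1 : SplitOctonion F) + ((derivative f).eval ξ₁)⁻¹ • u1 :=
  peval_eq_smul_one_add_u1_iff_general f γ x
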